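/- arXiv:2507.00160 — 2 statements merged into one kernel-verified Lean document; each statement's English description precedes it below -/
import Mathlib

section
/- Let O ⊆ ℝ^d be a bounded open set, f : ℝ → ℝ continuously differentiable, and let u₁, u₂ : ℝ^d → ℝ be continuous on the closure of O and twice continuously differentiable on O, satisfying −Δu_i(x) ≤ f(u_i(x)) for all x ∈ O and u_i = 0 on ∂O (i = 1, 2), i.e., each u_i is a classical sub-solution of −Δu = f(u) with zero Dirichlet boundary values. Define w(x) := max(u₁(x), u₂(x)) and G : O → ℝ^d by G(x) := ∇u₁(x) if u₁(x) > u₂(x) and G(x) := ∇u₂(x) if u₁(x) ≤ u₂(x). Then w is a sub-solution in the weak sense: for every smooth φ : ℝ^d → ℝ with compact support contained in O and φ ≥ 0, one has ∫_O G(x)·∇φ(x) dx ≤ ∫_O f(w(x)) φ(x) dx. -/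
open MeasureTheory

/-- The Laplacian `Δu(x) = ∑ i, ∂²u/∂x_i²(x)` as the sum of second partial derivatives. -/
noncomputable def lap {d : ℕ} (u : EuclideanSpace ℝ (Fin d) → ℝ)
    (x : EuclideanSpace ℝ (Fin d)) : ℝ :=
  ∑ i : Fin d, fderiv ℝ (fun y => fderiv ℝ u y (EuclideanSpace.single i (1 : ℝ))) x
    (EuclideanSpace.single i (1 : ℝ))

section Aux

open Filter Set

/-! ### A smooth increasing approximation of the indicator of `(0, ∞)` -/

noncomputable def thetaR (n : ℕ) (t : ℝ) : ℝ := expNegInvGlue (n * t)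

lemma thetaR_contDiff (n : ℕ) : ContDiff ℝ ((⊤:ℕ∞):WithTop ℕ∞) (thetaR n) := by
  have : thetaR n = fun t => expNegInvGlue ((n : ℝ) * t) := rfl
  rw [this]
  exact expNegInvGlue.contDiff.comp (contDiff_const.mul contDiff_id)

lemma thetaR_nonneg (n : ℕ) (t : ℝ) : 0 ≤ thetaR n t := expNegInvGlue.nonneg _

lemma expNegInvGlue_le_one (x : ℝ) : expNegInvGlue x ≤ 1 := by
  rcases le_or_gt x 0 with h | h
  · rw [expNegInvGlue.zero_of_nonpos h]; norm_num
  · rw [show expNegInvGlue x = Real.exp (-x⁻¹) by simp [expNegInvGlue, h.not_ge]]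
    rw [Real.exp_le_one_iff]
    simpa using (inv_nonneg.2 h.le)

lemma expNegInvGlue_monotone : Monotone expNegInvGlue := by
  intro a b hab
  rcases le_or_gt a 0 with ha | ha
  · rw [expNegInvGlue.zero_of_nonpos ha]
    exact expNegInvGlue.nonneg b
  · have hb : 0 < b := ha.trans_le hab
    rw [show expNegInvGlue a = Real.exp (-a⁻¹) by simp [expNegInvGlue, ha.not_ge],
        show expNegInvGlue b = Real.exp (-b⁻¹) by simp [expNegInvGlue, hb.not_ge]]
    exact Real.exp_le_exp.2 (by gcongr)

lemma thetaR_le_one (n : ℕ) (t : ℝ) : thetaR n t ≤ 1 := expNegInvGlue_le_one _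

lemma thetaR_of_nonpos (n : ℕ) {t : ℝ} (ht : t ≤ 0) : thetaR n t = 0 :=
  expNegInvGlue.zero_of_nonpos (mul_nonpos_of_nonneg_of_nonpos (Nat.cast_nonneg n) ht)

lemma thetaR_monotone (n : ℕ) : Monotone (thetaR n) := fun a b hab =>
  expNegInvGlue_monotone (by gcongr)

lemma monotone_deriv_nonneg {g : ℝ → ℝ} {t : ℝ} (hm : Monotone g)
    (hd : DifferentiableAt ℝ g t) : 0 ≤ deriv g t := by
  have h := hd.hasDerivAt
  rw [hasDerivAt_iff_tendsto_slope] at h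
  refine ge_of_tendsto h ?_
  filter_upwards [self_mem_nhdsWithin] with y (hy : y ≠ t)
  rcases lt_or_gt_of_ne hy with h' | h'
  · rw [slope_def_field, div_nonneg_iff]
    right
    exact ⟨by simpa using hm h'.le, by simpa using h'.le⟩
  · rw [slope_def_field, div_nonneg_iff]
    left
    exact ⟨by simpa using hm h'.le, by simpa using h'.le⟩

lemma thetaR_deriv_nonneg (n : ℕ) (t : ℝ) : 0 ≤ deriv (thetaR n) t :=
  monotone_deriv_nonneg (thetaR_monotone n)
    (((thetaR_contDiff n).differentiable (by simp)).differentiableAt)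

lemma thetaR_tendsto {t : ℝ} (ht : 0 < t) :
    Tendsto (fun n : ℕ => thetaR n t) atTop (nhds 1) := by
  have h1 : Tendsto (fun n : ℕ => ((n : ℝ) * t)) atTop atTop :=
    (tendsto_natCast_atTop_atTop).atTop_mul_const ht
  have h2 : Tendsto (fun n : ℕ => -((n : ℝ) * t)⁻¹) atTop (nhds 0) := by
    simpa using (h1.inv_tendsto_atTop).neg
  have h3 : Tendsto (fun n : ℕ => Real.exp (-((n : ℝ) * t)⁻¹)) atTop (nhds 1) := by
    simpa [Function.comp_def] using (Real.continuous_exp.tendsto 0).comp h2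
  refine h3.congr' ?_
  filter_upwards [eventually_ge_atTop 1] with n hn
  have hnt : 0 < (n : ℝ) * t := by
    have : (0:ℝ) < n := by exact_mod_cast hn
    positivity
  simp [thetaR, expNegInvGlue, hnt.not_ge]

/-! ### The antiderivative `hfun n`, a smooth convex approximation of `t ↦ max t 0` -/

noncomputable def hfun (n : ℕ) (t : ℝ) : ℝ := ∫ s in (0:ℝ)..t, thetaR n s

lemma hfun_hasDerivAt (n : ℕ) (t : ℝ) : HasDerivAt (hfun n) (thetaR n t) t :=
  ((thetaR_contDiff n).continuous.integral_hasStrictDerivAt 0 t).hasDerivAt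

lemma hfun_contDiff (n : ℕ) : ContDiff ℝ 2 (hfun n) := by
  have hd : deriv (hfun n) = thetaR n := funext fun t => (hfun_hasDerivAt n t).deriv
  rw [show (2 : WithTop ℕ∞) = 1 + 1 by norm_num, contDiff_succ_iff_deriv]
  refine ⟨fun t => (hfun_hasDerivAt n t).differentiableAt, ?_, ?_⟩
  · intro h; exact absurd h (by norm_num)
  · rw [hd]; exact (thetaR_contDiff n).of_le (by exact_mod_cast le_top)

/-! ### Integration by parts -/

lemma integral_fderiv_apply_eq_zero {d : ℕ}
    (ψ : EuclideanSpace ℝ (Fin d) → ℝ) (h1 : ContDiff ℝ 1 ψ) (h2 : HasCompactSupport ψ)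
    (v : EuclideanSpace ℝ (Fin d)) : ∫ x, fderiv ℝ ψ x v = 0 := by
  obtain ⟨C, hC⟩ := ContDiff.lipschitzWith_of_hasCompactSupport h2 h1 one_ne_zero
  have key := LipschitzWith.integral_lineDeriv_mul_eq (μ := volume)
    (LipschitzWith.const (1:ℝ)) hC h2 v
  have h0 : ∫ x : EuclideanSpace ℝ (Fin d), lineDeriv ℝ (fun _ => (1:ℝ)) x v * ψ x = 0 := by
    have : ∀ x : EuclideanSpace ℝ (Fin d), lineDeriv ℝ (fun _ => (1:ℝ)) x v = 0 := fun x =>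
      ((hasFDerivAt_const (1:ℝ) x).hasLineDerivAt v).lineDeriv.trans (by simp)
    simp [this]
  rw [h0] at key
  have h3 : ∀ x, lineDeriv ℝ ψ x (-v) * (fun _ => (1:ℝ)) x = -(fderiv ℝ ψ x v) := by
    intro x
    have hd : DifferentiableAt ℝ ψ x := (h1.differentiable one_ne_zero).differentiableAt
    rw [hd.lineDeriv_eq_fderiv]
    simp
  simp only [h3] at key
  rw [integral_neg] at key
  linarith [key]

/-! ### Gluing continuity/smoothness across an open cover -/

lemma continuous_glue {X : Type*} [TopologicalSpace X] {f : X → ℝ} {O U : Set X}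
    (hO : IsOpen O) (hU : IsOpen U) (hf : ContinuousOn f O) (h0 : ∀ x ∈ U, f x = 0)
    (hcov : ∀ x, x ∈ O ∨ x ∈ U) : Continuous f := by
  rw [continuous_iff_continuousAt]
  intro x
  rcases hcov x with hx | hx
  · exact hf.continuousAt (hO.mem_nhds hx)
  · refine ContinuousAt.congr (continuousAt_const (y := (0:ℝ))) ?_
    filter_upwards [hU.mem_nhds hx] with y hy
    exact (h0 y hy).symm

/-! ### Derivative computations -/

variable {d : ℕ} {O : Set (EuclideanSpace ℝ (Fin d))} {u₁ u₂ : EuclideanSpace ℝ (Fin d) → ℝ}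

lemma diffAt_of_contDiffOn_two (hO : IsOpen O) (hu : ContDiffOn ℝ 2 u₁ O)
    {x : EuclideanSpace ℝ (Fin d)} (hx : x ∈ O) : DifferentiableAt ℝ u₁ x :=
  ((hu.differentiableOn (by norm_num)).differentiableAt (hO.mem_nhds hx))

lemma contDiffOn_fderiv_apply (hO : IsOpen O) (hu : ContDiffOn ℝ 2 u₁ O)
    (w : EuclideanSpace ℝ (Fin d)) :
    ContDiffOn ℝ 1 (fun y => fderiv ℝ u₁ y w) O :=
  (hu.fderiv_of_isOpen hO (by norm_num)).clm_apply contDiffOn_const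

lemma diffAt_fderiv_apply (hO : IsOpen O) (hu : ContDiffOn ℝ 2 u₁ O)
    (w : EuclideanSpace ℝ (Fin d)) {x : EuclideanSpace ℝ (Fin d)} (hx : x ∈ O) :
    DifferentiableAt ℝ (fun y => fderiv ℝ u₁ y w) x :=
  (((contDiffOn_fderiv_apply hO hu w).differentiableOn one_ne_zero).differentiableAt (hO.mem_nhds hx))

lemma fderiv_W_eq (hO : IsOpen O) (h₁ : ContDiffOn ℝ 2 u₁ O) (h₂ : ContDiffOn ℝ 2 u₂ O)
    (n : ℕ) {x : EuclideanSpace ℝ (Fin d)} (hx : x ∈ O) :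
    fderiv ℝ (fun y => u₂ y + hfun n (u₁ y - u₂ y)) x
      = fderiv ℝ u₂ x + thetaR n (u₁ x - u₂ x) • (fderiv ℝ u₁ x - fderiv ℝ u₂ x) := by
  have d1 := (diffAt_of_contDiffOn_two hO h₁ hx).hasFDerivAt
  have d2 := (diffAt_of_contDiffOn_two hO h₂ hx).hasFDerivAt
  have dv : HasFDerivAt (fun y => u₁ y - u₂ y) (fderiv ℝ u₁ x - fderiv ℝ u₂ x) x := d1.sub d2
  have dh := (hfun_hasDerivAt n (u₁ x - u₂ x)).comp_hasFDerivAt x dv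
  exact (d2.add dh).fderiv

lemma snd_deriv_W (hO : IsOpen O) (h₁ : ContDiffOn ℝ 2 u₁ O) (h₂ : ContDiffOn ℝ 2 u₂ O)
    (n : ℕ) {x : EuclideanSpace ℝ (Fin d)} (hx : x ∈ O) (ei : EuclideanSpace ℝ (Fin d)) :
    fderiv ℝ (fun y => fderiv ℝ (fun z => u₂ z + hfun n (u₁ z - u₂ z)) y ei) x ei
      = fderiv ℝ (fun y => fderiv ℝ u₂ y ei) x ei
        + thetaR n (u₁ x - u₂ x) *
            (fderiv ℝ (fun y => fderiv ℝ u₁ y ei) x ei - fderiv ℝ (fun y => fderiv ℝ u₂ y ei) x ei)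
        + deriv (thetaR n) (u₁ x - u₂ x) * (fderiv ℝ u₁ x ei - fderiv ℝ u₂ x ei)^2 := by
  have hEq : (fun y => fderiv ℝ (fun z => u₂ z + hfun n (u₁ z - u₂ z)) y ei)
      =ᶠ[nhds x] (fun y => fderiv ℝ u₂ y ei
        + thetaR n (u₁ y - u₂ y) * (fderiv ℝ u₁ y ei - fderiv ℝ u₂ y ei)) := by
    filter_upwards [hO.mem_nhds hx] with y hy
    rw [fderiv_W_eq hO h₁ h₂ n hy]
    simp
  rw [hEq.fderiv_eq]
  have A1 := (diffAt_fderiv_apply hO h₁ ei hx).hasFDerivAt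
  have A2 := (diffAt_fderiv_apply hO h₂ ei hx).hasFDerivAt
  have d1 := (diffAt_of_contDiffOn_two hO h₁ hx).hasFDerivAt
  have d2 := (diffAt_of_contDiffOn_two hO h₂ hx).hasFDerivAt
  have hv : HasFDerivAt (fun y => u₁ y - u₂ y) (fderiv ℝ u₁ x - fderiv ℝ u₂ x) x := d1.sub d2
  have hθ : HasDerivAt (thetaR n) (deriv (thetaR n) (u₁ x - u₂ x)) (u₁ x - u₂ x) :=
    (((thetaR_contDiff n).differentiable (by simp)) _).hasDerivAt
  have hθv := hθ.comp_hasFDerivAt x hv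
  simp only [Function.comp_def] at hθv
  have hmul := hθv.mul (A1.sub A2)
  have htot := A2.add hmul
  have htot' : HasFDerivAt (fun y => fderiv ℝ u₂ y ei
      + thetaR n (u₁ y - u₂ y) * (fderiv ℝ u₁ y ei - fderiv ℝ u₂ y ei)) _ x := htot
  rw [htot'.fderiv]
  simp only [ContinuousLinearMap.add_apply, ContinuousLinearMap.smul_apply,
    ContinuousLinearMap.sub_apply, ContinuousLinearMap.coe_smul', Pi.smul_apply,
    smul_eq_mul, Pi.sub_apply]
  ring

lemma lap_W_eq (hO : IsOpen O) (h₁ : ContDiffOn ℝ 2 u₁ O) (h₂ : ContDiffOn ℝ 2 u₂ O)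
    (n : ℕ) {x : EuclideanSpace ℝ (Fin d)} (hx : x ∈ O) :
    lap (fun y => u₂ y + hfun n (u₁ y - u₂ y)) x
      = lap u₂ x + thetaR n (u₁ x - u₂ x) * (lap u₁ x - lap u₂ x)
        + deriv (thetaR n) (u₁ x - u₂ x) *
            ∑ i : Fin d, (fderiv ℝ u₁ x (EuclideanSpace.single i (1:ℝ))
              - fderiv ℝ u₂ x (EuclideanSpace.single i (1:ℝ)))^2 := by
  unfold lap
  rw [Finset.sum_congr rfl (fun i _ => snd_deriv_W hO h₁ h₂ n hx (EuclideanSpace.single i (1:ℝ)))]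
  rw [Finset.sum_add_distrib, Finset.sum_add_distrib, ← Finset.mul_sum, ← Finset.mul_sum,
    Finset.sum_sub_distrib]

lemma gradient_apply (u : EuclideanSpace ℝ (Fin d) → ℝ) (x : EuclideanSpace ℝ (Fin d))
    (i : Fin d) : gradient u x i = fderiv ℝ u x (EuclideanSpace.single i (1:ℝ)) := by
  have h1 : (inner ℝ (gradient u x) (EuclideanSpace.single i (1:ℝ)) : ℝ)
      = fderiv ℝ u x (EuclideanSpace.single i (1:ℝ)) := by
    unfold gradient
    exact InnerProductSpace.toDual_symm_apply
  rw [← h1, EuclideanSpace.inner_single_right]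
  simp

lemma inner_gradient_eq (u φ : EuclideanSpace ℝ (Fin d) → ℝ) (x : EuclideanSpace ℝ (Fin d)) :
    (inner ℝ (gradient u x) (gradient φ x) : ℝ)
      = ∑ i : Fin d, fderiv ℝ u x (EuclideanSpace.single i (1:ℝ))
          * fderiv ℝ φ x (EuclideanSpace.single i (1:ℝ)) := by
  rw [PiLp.inner_apply]
  refine Finset.sum_congr rfl fun i _ => ?_
  rw [gradient_apply, gradient_apply]
  simp [RCLike.inner_apply, mul_comm]

end Aux

/-- Let `O ⊆ ℝ^d` be bounded open, `f : ℝ → ℝ` be `C¹`, and `u₁, u₂`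
classical sub-solutions of `−Δu = f(u)` with zero Dirichlet boundary values. Set
`w = max(u₁, u₂)` and `G(x) = ∇u₁(x)` if `u₁(x) > u₂(x)`, `G(x) = ∇u₂(x)` if
`u₁(x) ≤ u₂(x)`. Then `w` is a weak sub-solution: for every smooth `φ ≥ 0` with
compact support in `O`, `∫_O G·∇φ ≤ ∫_O f(w) φ`. -/
theorem max_of_subsolutions_is_weak_subsolution (d : ℕ)
    (O : Set (EuclideanSpace ℝ (Fin d))) (hO : IsOpen O) (hObdd : Bornology.IsBounded O)
    (f : ℝ → ℝ) (hf : ContDiff ℝ 1 f)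
    (u₁ u₂ : EuclideanSpace ℝ (Fin d) → ℝ)
    (h₁cont : ContinuousOn u₁ (closure O)) (h₁C2 : ContDiffOn ℝ 2 u₁ O)
    (h₂cont : ContinuousOn u₂ (closure O)) (h₂C2 : ContDiffOn ℝ 2 u₂ O)
    (h₁sub : ∀ x ∈ O, -lap u₁ x ≤ f (u₁ x))
    (h₂sub : ∀ x ∈ O, -lap u₂ x ≤ f (u₂ x))
    (h₁bd : ∀ x ∈ frontier O, u₁ x = 0)
    (h₂bd : ∀ x ∈ frontier O, u₂ x = 0)
    (w : EuclideanSpace ℝ (Fin d) → ℝ) (hw : ∀ x, w x = max (u₁ x) (u₂ x))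
    (G : EuclideanSpace ℝ (Fin d) → EuclideanSpace ℝ (Fin d))
    (hG : ∀ x, G x = if u₂ x < u₁ x then gradient u₁ x else gradient u₂ x) :
    ∀ φ : EuclideanSpace ℝ (Fin d) → ℝ,
      ContDiff ℝ (⊤ : ℕ∞) φ → HasCompactSupport φ → tsupport φ ⊆ O → (∀ x, 0 ≤ φ x) →
      ∫ x in O, (inner ℝ (G x) (gradient φ x) : ℝ) ≤ ∫ x in O, f (w x) * φ x := by
  intro φ hφ hφc hKO hφpos
  classical
  have hφC1 : ContDiff ℝ 1 φ := hφ.of_le (by simp)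
  have hφcont : Continuous φ := hφ.continuous
  have hDφcont : Continuous (fderiv ℝ φ) := hφ.continuous_fderiv (by simp)
  have hK : IsCompact (tsupport φ) := hφc
  have hUopen : IsOpen (tsupport φ)ᶜ := (isClosed_tsupport φ).isOpen_compl
  have hcov : ∀ x, x ∈ O ∨ x ∈ (tsupport φ)ᶜ := fun x => by
    by_cases h : x ∈ tsupport φ
    · exact Or.inl (hKO h)
    · exact Or.inr h
  have hOmeas : MeasurableSet O := hO.measurableSet
  have integrable_of : ∀ g : EuclideanSpace ℝ (Fin d) → ℝ, ContinuousOn g O →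
      (∀ x ∈ (tsupport φ)ᶜ, g x = 0) → IntegrableOn g O volume := fun g hg h0 =>
    ((continuous_glue hO hUopen hg h0 hcov).integrable_of_hasCompactSupport
      (HasCompactSupport.intro hK (fun x hx => h0 x hx))).integrableOn
  have hWC2 : ∀ n : ℕ, ContDiffOn ℝ 2 (fun y => u₂ y + hfun n (u₁ y - u₂ y)) O := fun n =>
    h₂C2.add ((hfun_contDiff n).comp_contDiffOn (h₁C2.sub h₂C2))
  have hDφi : ∀ i : Fin d, Continuous (fun x => fderiv ℝ φ x (EuclideanSpace.single i (1:ℝ))) :=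
    fun i => hDφcont.clm_apply continuous_const
  have hDφ0 : ∀ i : Fin d, ∀ x ∈ (tsupport φ)ᶜ,
      fderiv ℝ φ x (EuclideanSpace.single i (1:ℝ)) = 0 := by
    intro i x hx
    have h : fderiv ℝ φ x = 0 := by
      by_contra h
      exact hx (support_fderiv_subset ℝ (Function.mem_support.2 h))
    simp [h]
  -- integrability of the main pieces
  have hg1 : ∀ (n : ℕ) (i : Fin d), IntegrableOn (fun x =>
      fderiv ℝ (fun y => fderiv ℝ (fun z => u₂ z + hfun n (u₁ z - u₂ z)) y
        (EuclideanSpace.single i (1:ℝ))) x (EuclideanSpace.single i (1:ℝ)) * φ x) O volume := by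
    intro n i
    refine integrable_of _ ?_ ?_
    · exact (((((hWC2 n).fderiv_of_isOpen hO (by norm_num)).clm_apply
        contDiffOn_const).continuousOn_fderiv_of_isOpen hO le_rfl).clm_apply
        continuousOn_const).mul hφcont.continuousOn
    · intro x hx; simp [image_eq_zero_of_notMem_tsupport hx]
  have hg2 : ∀ (n : ℕ) (i : Fin d), IntegrableOn (fun x =>
      fderiv ℝ (fun y => u₂ y + hfun n (u₁ y - u₂ y)) x (EuclideanSpace.single i (1:ℝ))
        * fderiv ℝ φ x (EuclideanSpace.single i (1:ℝ))) O volume := by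
    intro n i
    refine integrable_of _ ?_ ?_
    · exact (contDiffOn_fderiv_apply hO (hWC2 n) _).continuousOn.mul (hDφi i).continuousOn
    · intro x hx; simp [hDφ0 i x hx]
  have hFnInt : ∀ n : ℕ, IntegrableOn (fun x => ((1 - thetaR n (u₁ x - u₂ x)) * f (u₂ x)
      + thetaR n (u₁ x - u₂ x) * f (u₁ x)) * φ x) O volume := by
    intro n
    refine integrable_of _ ?_ ?_
    · have hv : ContinuousOn (fun x => u₁ x - u₂ x) O :=
        (h₁C2.continuousOn).sub (h₂C2.continuousOn)
      have hθc : ContinuousOn (fun x => thetaR n (u₁ x - u₂ x)) O :=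
        (thetaR_contDiff n).continuous.comp_continuousOn hv
      exact (((continuousOn_const.sub hθc).mul
        (hf.continuous.comp_continuousOn h₂C2.continuousOn)).add
        (hθc.mul (hf.continuous.comp_continuousOn h₁C2.continuousOn))).mul hφcont.continuousOn
    · intro x hx; simp [image_eq_zero_of_notMem_tsupport hx]
  -- Step (5): integration by parts and the pointwise Laplacian inequality
  have step5 : ∀ n : ℕ,
      (∫ x in O, (∑ i : Fin d, fderiv ℝ (fun y => u₂ y + hfun n (u₁ y - u₂ y)) x
          (EuclideanSpace.single i (1:ℝ)) * fderiv ℝ φ x (EuclideanSpace.single i (1:ℝ))))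
        ≤ ∫ x in O, ((1 - thetaR n (u₁ x - u₂ x)) * f (u₂ x)
            + thetaR n (u₁ x - u₂ x) * f (u₁ x)) * φ x := by
    intro n
    have ibp : ∀ i : Fin d,
        (∫ x in O, fderiv ℝ (fun y => fderiv ℝ (fun z => u₂ z + hfun n (u₁ z - u₂ z)) y
            (EuclideanSpace.single i (1:ℝ))) x (EuclideanSpace.single i (1:ℝ)) * φ x)
          + (∫ x in O, fderiv ℝ (fun y => u₂ y + hfun n (u₁ y - u₂ y)) x
              (EuclideanSpace.single i (1:ℝ))
                * fderiv ℝ φ x (EuclideanSpace.single i (1:ℝ))) = 0 := by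
      intro i
      have ψC1 : ContDiff ℝ 1 (fun x =>
          fderiv ℝ (fun z => u₂ z + hfun n (u₁ z - u₂ z)) x (EuclideanSpace.single i (1:ℝ))
            * φ x) := by
        rw [contDiff_iff_contDiffAt]
        intro x
        rcases hcov x with hx | hx
        · exact ((contDiffOn_fderiv_apply hO (hWC2 n) (EuclideanSpace.single i (1:ℝ))).mul
            (hφC1.contDiffOn)).contDiffAt (hO.mem_nhds hx)
        · refine (contDiffAt_const (c := (0:ℝ))).congr_of_eventuallyEq ?_
          filter_upwards [hUopen.mem_nhds hx] with y hy
          simp [image_eq_zero_of_notMem_tsupport hy]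
      have ψHC : HasCompactSupport (fun x =>
          fderiv ℝ (fun z => u₂ z + hfun n (u₁ z - u₂ z)) x (EuclideanSpace.single i (1:ℝ))
            * φ x) :=
        HasCompactSupport.intro hK fun x hx => by simp [image_eq_zero_of_notMem_tsupport hx]
      have key := integral_fderiv_apply_eq_zero _ ψC1 ψHC (EuclideanSpace.single i (1:ℝ))
      have hout : ∀ x ∉ O, fderiv ℝ (fun x =>
          fderiv ℝ (fun z => u₂ z + hfun n (u₁ z - u₂ z)) x (EuclideanSpace.single i (1:ℝ))
            * φ x) x (EuclideanSpace.single i (1:ℝ)) = 0 := by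
        intro x hx
        have hxU : x ∈ (tsupport φ)ᶜ := (hcov x).resolve_left hx
        have h : fderiv ℝ (fun x =>
            fderiv ℝ (fun z => u₂ z + hfun n (u₁ z - u₂ z)) x (EuclideanSpace.single i (1:ℝ))
              * φ x) x = fderiv ℝ (fun _ => (0:ℝ)) x := by
          apply Filter.EventuallyEq.fderiv_eq
          filter_upwards [hUopen.mem_nhds hxU] with y hy
          simp [image_eq_zero_of_notMem_tsupport hy]
        rw [h, fderiv_fun_const]
        simp
      have key' : (∫ x in O, fderiv ℝ (fun x =>
          fderiv ℝ (fun z => u₂ z + hfun n (u₁ z - u₂ z)) x (EuclideanSpace.single i (1:ℝ))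
            * φ x) x (EuclideanSpace.single i (1:ℝ))) = 0 := by
        rw [setIntegral_eq_integral_of_forall_compl_eq_zero hout]
        exact key
      have hprod : ∀ x ∈ O, fderiv ℝ (fun x =>
          fderiv ℝ (fun z => u₂ z + hfun n (u₁ z - u₂ z)) x (EuclideanSpace.single i (1:ℝ))
            * φ x) x (EuclideanSpace.single i (1:ℝ))
          = fderiv ℝ (fun y => fderiv ℝ (fun z => u₂ z + hfun n (u₁ z - u₂ z)) y
              (EuclideanSpace.single i (1:ℝ))) x (EuclideanSpace.single i (1:ℝ)) * φ x
            + fderiv ℝ (fun y => u₂ y + hfun n (u₁ y - u₂ y)) x (EuclideanSpace.single i (1:ℝ))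
                * fderiv ℝ φ x (EuclideanSpace.single i (1:ℝ)) := by
        intro x hx
        have hA := (diffAt_fderiv_apply hO (hWC2 n) (EuclideanSpace.single i (1:ℝ)) hx).hasFDerivAt
        have hB := (hφC1.differentiable one_ne_zero x).hasFDerivAt
        have hAB : HasFDerivAt (fun x =>
            fderiv ℝ (fun z => u₂ z + hfun n (u₁ z - u₂ z)) x (EuclideanSpace.single i (1:ℝ))
              * φ x) _ x := hA.mul hB
        rw [hAB.fderiv]
        simp only [ContinuousLinearMap.add_apply, ContinuousLinearMap.smul_apply, smul_eq_mul]
        ring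
      calc (∫ x in O, fderiv ℝ (fun y => fderiv ℝ (fun z => u₂ z + hfun n (u₁ z - u₂ z)) y
              (EuclideanSpace.single i (1:ℝ))) x (EuclideanSpace.single i (1:ℝ)) * φ x)
            + (∫ x in O, fderiv ℝ (fun y => u₂ y + hfun n (u₁ y - u₂ y)) x
                (EuclideanSpace.single i (1:ℝ)) * fderiv ℝ φ x (EuclideanSpace.single i (1:ℝ)))
          = ∫ x in O, (fderiv ℝ (fun y => fderiv ℝ (fun z => u₂ z + hfun n (u₁ z - u₂ z)) y
              (EuclideanSpace.single i (1:ℝ))) x (EuclideanSpace.single i (1:ℝ)) * φ x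
            + fderiv ℝ (fun y => u₂ y + hfun n (u₁ y - u₂ y)) x (EuclideanSpace.single i (1:ℝ))
                * fderiv ℝ φ x (EuclideanSpace.single i (1:ℝ))) :=
            (integral_add (hg1 n i) (hg2 n i)).symm
        _ = ∫ x in O, fderiv ℝ (fun x =>
              fderiv ℝ (fun z => u₂ z + hfun n (u₁ z - u₂ z)) x (EuclideanSpace.single i (1:ℝ))
                * φ x) x (EuclideanSpace.single i (1:ℝ)) :=
            setIntegral_congr_fun hOmeas (fun x hx => (hprod x hx).symm)
        _ = 0 := key'
    have hlapInt : IntegrableOn (fun x =>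
        -lap (fun y => u₂ y + hfun n (u₁ y - u₂ y)) x * φ x) O volume := by
      have h : (fun x => -lap (fun y => u₂ y + hfun n (u₁ y - u₂ y)) x * φ x)
          = fun x => ∑ i : Fin d, -(fderiv ℝ (fun y => fderiv ℝ
              (fun z => u₂ z + hfun n (u₁ z - u₂ z)) y (EuclideanSpace.single i (1:ℝ))) x
                (EuclideanSpace.single i (1:ℝ)) * φ x) := by
        funext x
        simp [lap, Finset.sum_mul, neg_mul]
      rw [h]
      exact integrable_finset_sum _ (fun i _ => (hg1 n i).neg)
    have hLHS : (∫ x in O, (∑ i : Fin d, fderiv ℝ (fun y => u₂ y + hfun n (u₁ y - u₂ y)) x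
          (EuclideanSpace.single i (1:ℝ)) * fderiv ℝ φ x (EuclideanSpace.single i (1:ℝ))))
        = ∫ x in O, -lap (fun y => u₂ y + hfun n (u₁ y - u₂ y)) x * φ x := by
      rw [integral_finset_sum _ (fun i _ => hg2 n i)]
      have e1 : ∀ i : Fin d, (∫ x in O, fderiv ℝ (fun y => u₂ y + hfun n (u₁ y - u₂ y)) x
          (EuclideanSpace.single i (1:ℝ)) * fderiv ℝ φ x (EuclideanSpace.single i (1:ℝ)))
          = -(∫ x in O, fderiv ℝ (fun y => fderiv ℝ (fun z => u₂ z + hfun n (u₁ z - u₂ z)) y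
              (EuclideanSpace.single i (1:ℝ))) x (EuclideanSpace.single i (1:ℝ)) * φ x) := by
        intro i
        have h := ibp i
        linarith
      rw [Finset.sum_congr rfl (fun i _ => e1 i)]
      rw [Finset.sum_neg_distrib, ← integral_finset_sum _ (fun i _ => hg1 n i), ← integral_neg]
      refine setIntegral_congr_fun hOmeas (fun x _ => ?_)
      simp [lap, Finset.sum_mul, neg_mul]
    rw [hLHS]
    refine setIntegral_mono_on hlapInt (hFnInt n) hOmeas (fun x hx => ?_)
    have hl := lap_W_eq hO h₁C2 h₂C2 n hx
    have h1 := h₁sub x hx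
    have h2 := h₂sub x hx
    have ht0 := thetaR_nonneg n (u₁ x - u₂ x)
    have ht1 := thetaR_le_one n (u₁ x - u₂ x)
    have hθ' := thetaR_deriv_nonneg n (u₁ x - u₂ x)
    have hs : (0:ℝ) ≤ ∑ i : Fin d, (fderiv ℝ u₁ x (EuclideanSpace.single i (1:ℝ))
        - fderiv ℝ u₂ x (EuclideanSpace.single i (1:ℝ)))^2 :=
      Finset.sum_nonneg fun i _ => sq_nonneg _
    have hp := hφpos x
    have hmain : -lap (fun y => u₂ y + hfun n (u₁ y - u₂ y)) x
        ≤ (1 - thetaR n (u₁ x - u₂ x)) * f (u₂ x) + thetaR n (u₁ x - u₂ x) * f (u₁ x) := by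
      nlinarith [mul_nonneg ht0 (by linarith : (0:ℝ) ≤ f (u₁ x) + lap u₁ x),
        mul_nonneg (by linarith : (0:ℝ) ≤ 1 - thetaR n (u₁ x - u₂ x))
          (by linarith : (0:ℝ) ≤ f (u₂ x) + lap u₂ x),
        mul_nonneg hθ' hs]
    exact mul_le_mul_of_nonneg_right hmain hp
  -- Step (7): convergence of the left-hand sides
  have step7 : Filter.Tendsto (fun n : ℕ => ∫ x in O,
      (∑ i : Fin d, fderiv ℝ (fun y => u₂ y + hfun n (u₁ y - u₂ y)) x
        (EuclideanSpace.single i (1:ℝ)) * fderiv ℝ φ x (EuclideanSpace.single i (1:ℝ))))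
      Filter.atTop (nhds (∫ x in O, (inner ℝ (G x) (gradient φ x) : ℝ))) := by
    refine tendsto_integral_of_dominated_convergence
      (fun x => ∑ i : Fin d, (|fderiv ℝ u₁ x (EuclideanSpace.single i (1:ℝ))|
        + 2 * |fderiv ℝ u₂ x (EuclideanSpace.single i (1:ℝ))|)
          * |fderiv ℝ φ x (EuclideanSpace.single i (1:ℝ))|) ?_ ?_ ?_ ?_
    · intro n
      refine Measurable.aestronglyMeasurable ?_
      refine Finset.measurable_sum _ (fun i _ => ?_)
      exact (measurable_fderiv_apply_const ℝ _ _).mul ((hDφi i).measurable)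
    · refine integrable_of _ ?_ ?_
      · refine continuousOn_finset_sum _ (fun i _ => ?_)
        exact (((contDiffOn_fderiv_apply hO h₁C2 _).continuousOn.abs).add
          ((contDiffOn_fderiv_apply hO h₂C2 _).continuousOn.abs.const_smul (2:ℝ))).mul
          (hDφi i).continuousOn.abs
      · intro x hx
        refine Finset.sum_eq_zero fun i _ => ?_
        simp [hDφ0 i x hx]
    · intro n
      rw [ae_restrict_iff' hOmeas]
      refine Filter.Eventually.of_forall fun x hx => ?_
      have hDW : ∀ i : Fin d, fderiv ℝ (fun y => u₂ y + hfun n (u₁ y - u₂ y)) x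
          (EuclideanSpace.single i (1:ℝ))
          = fderiv ℝ u₂ x (EuclideanSpace.single i (1:ℝ))
            + thetaR n (u₁ x - u₂ x) * (fderiv ℝ u₁ x (EuclideanSpace.single i (1:ℝ))
              - fderiv ℝ u₂ x (EuclideanSpace.single i (1:ℝ))) := by
        intro i
        rw [fderiv_W_eq hO h₁C2 h₂C2 n hx]
        simp
      calc ‖∑ i : Fin d, fderiv ℝ (fun y => u₂ y + hfun n (u₁ y - u₂ y)) x
            (EuclideanSpace.single i (1:ℝ)) * fderiv ℝ φ x (EuclideanSpace.single i (1:ℝ))‖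
          ≤ ∑ i : Fin d, |fderiv ℝ (fun y => u₂ y + hfun n (u₁ y - u₂ y)) x
            (EuclideanSpace.single i (1:ℝ)) * fderiv ℝ φ x (EuclideanSpace.single i (1:ℝ))| :=
            Finset.abs_sum_le_sum_abs _ _
        _ ≤ ∑ i : Fin d, (|fderiv ℝ u₁ x (EuclideanSpace.single i (1:ℝ))|
            + 2 * |fderiv ℝ u₂ x (EuclideanSpace.single i (1:ℝ))|)
              * |fderiv ℝ φ x (EuclideanSpace.single i (1:ℝ))| := by
            refine Finset.sum_le_sum fun i _ => ?_
            rw [abs_mul]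
            refine mul_le_mul_of_nonneg_right ?_ (abs_nonneg _)
            rw [hDW i]
            have ht0 := thetaR_nonneg n (u₁ x - u₂ x)
            have ht1 := thetaR_le_one n (u₁ x - u₂ x)
            calc |fderiv ℝ u₂ x (EuclideanSpace.single i (1:ℝ))
                + thetaR n (u₁ x - u₂ x) * (fderiv ℝ u₁ x (EuclideanSpace.single i (1:ℝ))
                  - fderiv ℝ u₂ x (EuclideanSpace.single i (1:ℝ)))|
                ≤ |fderiv ℝ u₂ x (EuclideanSpace.single i (1:ℝ))|
                  + thetaR n (u₁ x - u₂ x) * |fderiv ℝ u₁ x (EuclideanSpace.single i (1:ℝ))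
                    - fderiv ℝ u₂ x (EuclideanSpace.single i (1:ℝ))| := by
                  refine (abs_add_le _ _).trans ?_
                  rw [abs_mul, abs_of_nonneg ht0]
              _ ≤ |fderiv ℝ u₂ x (EuclideanSpace.single i (1:ℝ))|
                  + 1 * (|fderiv ℝ u₁ x (EuclideanSpace.single i (1:ℝ))|
                    + |fderiv ℝ u₂ x (EuclideanSpace.single i (1:ℝ))|) := by
                  refine add_le_add_right ?_ _
                  exact mul_le_mul ht1 (abs_sub _ _) (abs_nonneg _) zero_le_one
              _ ≤ |fderiv ℝ u₁ x (EuclideanSpace.single i (1:ℝ))|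
                  + 2 * |fderiv ℝ u₂ x (EuclideanSpace.single i (1:ℝ))| := by linarith
    · rw [ae_restrict_iff' hOmeas]
      refine Filter.Eventually.of_forall fun x hx => ?_
      rcases lt_or_ge (u₂ x) (u₁ x) with hlt | hle
      · have hvpos : 0 < u₁ x - u₂ x := sub_pos.2 hlt
        have hGx : (inner ℝ (G x) (gradient φ x) : ℝ)
            = ∑ i : Fin d, fderiv ℝ u₁ x (EuclideanSpace.single i (1:ℝ))
                * fderiv ℝ φ x (EuclideanSpace.single i (1:ℝ)) := by
          rw [hG x, if_pos hlt, inner_gradient_eq]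
        rw [hGx]
        have base : Filter.Tendsto (fun n : ℕ => ∑ i : Fin d,
            (fderiv ℝ u₂ x (EuclideanSpace.single i (1:ℝ))
              + thetaR n (u₁ x - u₂ x) * (fderiv ℝ u₁ x (EuclideanSpace.single i (1:ℝ))
                - fderiv ℝ u₂ x (EuclideanSpace.single i (1:ℝ))))
              * fderiv ℝ φ x (EuclideanSpace.single i (1:ℝ))) Filter.atTop
            (nhds (∑ i : Fin d, (fderiv ℝ u₂ x (EuclideanSpace.single i (1:ℝ))
              + 1 * (fderiv ℝ u₁ x (EuclideanSpace.single i (1:ℝ))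
                - fderiv ℝ u₂ x (EuclideanSpace.single i (1:ℝ))))
              * fderiv ℝ φ x (EuclideanSpace.single i (1:ℝ)))) := by
          refine tendsto_finset_sum _ fun i _ => ?_
          exact (tendsto_const_nhds.add ((thetaR_tendsto hvpos).mul_const _)).mul_const _
        have hval : (∑ i : Fin d, (fderiv ℝ u₂ x (EuclideanSpace.single i (1:ℝ))
              + 1 * (fderiv ℝ u₁ x (EuclideanSpace.single i (1:ℝ))
                - fderiv ℝ u₂ x (EuclideanSpace.single i (1:ℝ))))
              * fderiv ℝ φ x (EuclideanSpace.single i (1:ℝ)))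
            = ∑ i : Fin d, fderiv ℝ u₁ x (EuclideanSpace.single i (1:ℝ))
                * fderiv ℝ φ x (EuclideanSpace.single i (1:ℝ)) :=
          Finset.sum_congr rfl fun i _ => by ring
        rw [hval] at base
        refine base.congr fun n => ?_
        refine Finset.sum_congr rfl fun i _ => ?_
        rw [fderiv_W_eq hO h₁C2 h₂C2 n hx]
        simp
      · have hGx : (inner ℝ (G x) (gradient φ x) : ℝ)
            = ∑ i : Fin d, fderiv ℝ u₂ x (EuclideanSpace.single i (1:ℝ))
                * fderiv ℝ φ x (EuclideanSpace.single i (1:ℝ)) := by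
          rw [hG x, if_neg (not_lt.2 hle), inner_gradient_eq]
        rw [hGx]
        refine Filter.Tendsto.congr (fun n => ?_) tendsto_const_nhds
        refine Finset.sum_congr rfl fun i _ => ?_
        rw [fderiv_W_eq hO h₁C2 h₂C2 n hx, thetaR_of_nonpos n (sub_nonpos.2 hle)]
        simp
  -- Step (8): convergence of the right-hand sides
  have step8 : Filter.Tendsto (fun n : ℕ => ∫ x in O,
      ((1 - thetaR n (u₁ x - u₂ x)) * f (u₂ x) + thetaR n (u₁ x - u₂ x) * f (u₁ x)) * φ x)
      Filter.atTop (nhds (∫ x in O, f (w x) * φ x)) := by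
    refine tendsto_integral_of_dominated_convergence
      (fun x => (|f (u₁ x)| + |f (u₂ x)|) * φ x) ?_ ?_ ?_ ?_
    · intro n
      exact (hFnInt n).aestronglyMeasurable
    · refine integrable_of _ ?_ ?_
      · exact (((hf.continuous.comp_continuousOn h₁C2.continuousOn).abs.add
          (hf.continuous.comp_continuousOn h₂C2.continuousOn).abs)).mul hφcont.continuousOn
      · intro x hx; simp [image_eq_zero_of_notMem_tsupport hx]
    · intro n
      rw [ae_restrict_iff' hOmeas]
      refine Filter.Eventually.of_forall fun x hx => ?_
      have ht0 := thetaR_nonneg n (u₁ x - u₂ x)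
      have ht1 := thetaR_le_one n (u₁ x - u₂ x)
      have hp := hφpos x
      rw [Real.norm_eq_abs, abs_mul, abs_of_nonneg hp]
      refine mul_le_mul_of_nonneg_right ?_ hp
      refine (abs_add_le _ _).trans ?_
      rw [abs_mul, abs_mul, abs_of_nonneg (by linarith : (0:ℝ) ≤ 1 - thetaR n (u₁ x - u₂ x)),
        abs_of_nonneg ht0]
      nlinarith [abs_nonneg (f (u₁ x)), abs_nonneg (f (u₂ x))]
    · rw [ae_restrict_iff' hOmeas]
      refine Filter.Eventually.of_forall fun x hx => ?_
      rcases lt_or_ge (u₂ x) (u₁ x) with hlt | hle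
      · have hvpos : 0 < u₁ x - u₂ x := sub_pos.2 hlt
        have base : Filter.Tendsto (fun n : ℕ =>
            ((1 - thetaR n (u₁ x - u₂ x)) * f (u₂ x) + thetaR n (u₁ x - u₂ x) * f (u₁ x)) * φ x)
            Filter.atTop (nhds (((1 - 1) * f (u₂ x) + 1 * f (u₁ x)) * φ x)) :=
          (((tendsto_const_nhds.sub (thetaR_tendsto hvpos)).mul_const _).add
            ((thetaR_tendsto hvpos).mul_const _)).mul_const _
        rw [hw x, max_eq_left hlt.le]
        simpa using base
      · rw [hw x, max_eq_right hle]
        refine Filter.Tendsto.congr (fun n => ?_) tendsto_const_nhds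
        rw [thetaR_of_nonpos n (sub_nonpos.2 hle)]
        ring
  exact le_of_tendsto_of_tendsto' step7 step8 step5
end

section
/- (Parabolic maximum principle for the damped heat inequality) Let O ⊆ ℝ^d be a bounded open set, T > 0, p a real number with p ≥ 2, and β : [0,T] × O → ℝ a function with β(t,x) ≥ 0 everywhere. Let u : ℝ × ℝ^d → ℝ be continuous on [0,T] × closure(O), and suppose that on (0,T] × O the partial derivative ∂u/∂t exists and u(t,·) is twice continuously differentiable in x, with ∂u/∂t(t,x) − Δ_x u(t,x) + β(t,x)|u(t,x)|^{p−2}u(t,x) ≥ 0 for all (t,x) ∈ (0,T] × O. Assume u(0,x) ≥ 0 for all x in the closure of O, and u(t,x) = 0 for all t ∈ [0,T] and x ∈ ∂O. Then u(t,x) ≥ 0 for all (t,x) ∈ [0,T] × closure(O). -/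
/-! At a minimum `(t₀, x₀)` of `u + εt` over `[0,T] × closure O` with `t₀ > 0` and `x₀ ∈ O`,
one has `∂ₜu ≤ -ε` and `Δu ≥ 0`; if moreover `u(t₀,x₀) < 0`, the damping term
`β|u|^{p-2}u` is `≤ 0`, contradicting the differential inequality. So the minimum of `u + εt`
is attained on the parabolic boundary, where it is `≥ 0`, and letting `ε → 0` gives `u ≥ 0`. -/

open MeasureTheory

open Filter Topology Set

theorem nonneg_of_forall_pos_add_mul_nonneg {a t : ℝ} (h : ∀ ε > 0, 0 ≤ a + ε * t) : 0 ≤ a := by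
  have hlim : Tendsto (fun ε : ℝ => a + ε * t) (𝓝[>] 0) (𝓝 a) := by
    refine Tendsto.mono_left ?_ nhdsWithin_le_nhds
    exact (by fun_prop : Continuous fun ε : ℝ => a + ε * t).tendsto' 0 a (by simp)
  exact ge_of_tendsto hlim (eventually_nhdsWithin_of_forall h)

theorem IsLocalMin.deriv_deriv_nonneg {f : ℝ → ℝ} {x₀ : ℝ} (h : IsLocalMin f x₀)
    (hf : ContinuousAt f x₀) : 0 ≤ deriv (deriv f) x₀ := by
  by_contra! hneg
  -- Otherwise the sufficient test makes `x₀` a local maximum too, so `f` is locally constant.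
  have hmax := isLocalMax_of_deriv_deriv_neg hneg h.deriv_eq_zero hf
  have hconst : f =ᶠ[𝓝 x₀] fun _ => f x₀ := (h.and hmax).mono fun x hx => le_antisymm hx.2 hx.1
  exact hneg.ne (by rw [hconst.deriv.deriv_eq]; simp)

theorem IsLocalMin.fderiv_fderiv_apply_nonneg {E : Type*} [NormedAddCommGroup E]
    [NormedSpace ℝ E] {f : E → ℝ} {x₀ : E} (h : IsLocalMin f x₀) (hf : ContDiffAt ℝ 2 f x₀)
    (v : E) : 0 ≤ fderiv ℝ (fun y => fderiv ℝ f y v) x₀ v := by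
  set line : ℝ → E := fun s => x₀ + s • v
  have hline : ∀ s, HasDerivAt line v s := fun s => by
    simpa only [one_smul] using ((hasDerivAt_id' s).smul_const v).const_add x₀
  have hline0 : line 0 = x₀ := by simp [line]
  have hlim : Tendsto line (𝓝 0) (𝓝 x₀) := hline0 ▸ (hline 0).continuousAt
  have hdiff : ∀ᶠ y in 𝓝 x₀, DifferentiableAt ℝ f y :=
    (hf.eventually (by simp)).mono fun y hy => hy.differentiableAt (by simp)
  have hderiv : deriv (f ∘ line) =ᶠ[𝓝 0] fun s => fderiv ℝ f (line s) v :=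
    (hlim.eventually hdiff).mono fun s hs => (hs.hasFDerivAt.comp_hasDerivAt s (hline s)).deriv
  have hderiv2 : HasDerivAt (fun s => fderiv ℝ f (line s) v)
      (fderiv ℝ (fun y => fderiv ℝ f y v) x₀ v) 0 := by
    have hd : DifferentiableAt ℝ (fun y => fderiv ℝ f y v) x₀ :=
      ((hf.fderiv_right (m := 1) (by norm_num)).differentiableAt (by norm_num)).clm_apply
        (differentiableAt_const v)
    exact hd.hasFDerivAt.comp_hasDerivAt_of_eq 0 (hline 0) hline0.symm
  have hmin : IsLocalMin (f ∘ line) 0 := (hline0 ▸ h).comp_continuous (hline 0).continuousAt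
  have := hmin.deriv_deriv_nonneg ((hline0 ▸ hf.continuousAt).comp (hline 0).continuousAt)
  rwa [hderiv.deriv_eq, hderiv2.deriv] at this

theorem IsLocalMin.lap_nonneg {d : ℕ} {f : EuclideanSpace ℝ (Fin d) → ℝ}
    {x₀ : EuclideanSpace ℝ (Fin d)} (h : IsLocalMin f x₀) (hf : ContDiffAt ℝ 2 f x₀) :
    0 ≤ lap f x₀ :=
  Finset.sum_nonneg fun _ _ => h.fderiv_fderiv_apply_nonneg hf _

theorem IsMinOn.hasDerivAt_nonpos {g : ℝ → ℝ} {a b t g' : ℝ} (h : IsMinOn g (Icc a b) t)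
    (ht : t ∈ Ioc a b) (hg : HasDerivAt g g' t) : g' ≤ 0 := by
  have hcone : a - t ∈ posTangentConeAt (Icc a b) t := by
    apply mem_posTangentConeAt_of_segment_subset
    rw [add_sub_cancel]
    exact (convex_Icc a b).segment_subset (Ioc_subset_Icc_self ht)
      (left_mem_Icc.2 (ht.1.le.trans ht.2))
  have := h.localize.hasFDerivWithinAt_nonneg hg.hasDerivWithinAt.hasFDerivWithinAt hcone
  simp only [ContinuousLinearMap.toSpanSingleton_apply, smul_eq_mul] at this
  nlinarith [ht.1]

theorem time_deriv_sub_lap_le_of_isMinOn {d : ℕ} {u : ℝ → EuclideanSpace ℝ (Fin d) → ℝ}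
    {s : Set (EuclideanSpace ℝ (Fin d))} {a b c t₀ ut : ℝ} {x₀ : EuclideanSpace ℝ (Fin d)}
    (hmin : IsMinOn (fun q : ℝ × EuclideanSpace ℝ (Fin d) => u q.1 q.2 + c * q.1)
      (Icc a b ×ˢ s) (t₀, x₀))
    (ht₀ : t₀ ∈ Ioc a b) (hs : s ∈ 𝓝 x₀) (hut : HasDerivAt (fun t => u t x₀) ut t₀)
    (hC2 : ContDiffAt ℝ 2 (u t₀) x₀) : ut - lap (u t₀) x₀ ≤ -c := by
  have htime : ut + c ≤ 0 := by
    refine IsMinOn.hasDerivAt_nonpos (g := fun t => u t x₀ + c * t)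
      (fun t ht => hmin (mk_mem_prod ht (mem_of_mem_nhds hs))) ht₀ ?_
    have h := hut.add ((hasDerivAt_id' t₀).const_mul c)
    rw [mul_one] at h
    exact h
  have hspace : 0 ≤ lap (u t₀) x₀ := by
    refine IsLocalMin.lap_nonneg ?_ hC2
    filter_upwards [hs] with y hy
    have := hmin (mk_mem_prod (Ioc_subset_Icc_self ht₀) hy)
    simp only [mem_ofPred_eq] at this
    linarith
  linarith

theorem parabolic_maximum_principle_general (d : ℕ)
    (O : Set (EuclideanSpace ℝ (Fin d))) (hO : IsOpen O) (hObdd : Bornology.IsBounded O)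
    (T : ℝ) (p : ℝ)
    (β : ℝ → EuclideanSpace ℝ (Fin d) → ℝ) (hβ : ∀ t x, 0 ≤ β t x)
    (u : ℝ → EuclideanSpace ℝ (Fin d) → ℝ)
    (hcont : ContinuousOn (fun q : ℝ × EuclideanSpace ℝ (Fin d) => u q.1 q.2)
      (Set.Icc 0 T ×ˢ closure O))
    (hC2x : ∀ t ∈ Set.Ioc (0 : ℝ) T, ContDiffOn ℝ 2 (u t) O)
    (hineq : ∀ t ∈ Set.Ioc (0 : ℝ) T, ∀ x ∈ O, ∃ ut : ℝ,
      HasDerivAt (fun s => u s x) ut t ∧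
      0 ≤ ut - lap (u t) x + β t x * (|u t x| ^ (p - 2) * u t x))
    (hinit : ∀ x ∈ closure O, 0 ≤ u 0 x)
    (hbd : ∀ t ∈ Set.Icc (0 : ℝ) T, ∀ x ∈ frontier O, u t x = 0) :
    ∀ t ∈ Set.Icc (0 : ℝ) T, ∀ x ∈ closure O, 0 ≤ u t x := by
  intro t ht x hx
  refine nonneg_of_forall_pos_add_mul_nonneg (t := t) fun ε hε => ?_
  obtain ⟨⟨t₀, x₀⟩, ⟨ht₀, hx₀⟩, hmin⟩ :=
    (isCompact_Icc.prod hObdd.isCompact_closure).exists_isMinOn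
      (f := fun q => u q.1 q.2 + ε * q.1) ⟨(t, x), ht, hx⟩ (hcont.add (by fun_prop))
  have hle : u t₀ x₀ + ε * t₀ ≤ u t x + ε * t := hmin (mk_mem_prod ht hx)
  refine le_trans ?_ hle
  by_contra! hneg
  have huneg : u t₀ x₀ < 0 := by nlinarith [ht₀.1]
  have ht₀ne : t₀ ≠ 0 := by
    rintro rfl
    linarith [hinit x₀ hx₀]
  have hx₀O : x₀ ∈ O := by
    by_contra hx₀O
    linarith [hbd t₀ ht₀ x₀ (hO.frontier_eq ▸ ⟨hx₀, hx₀O⟩)]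
  have ht₀' : t₀ ∈ Ioc 0 T := ⟨ht₀.1.lt_of_ne' ht₀ne, ht₀.2⟩
  obtain ⟨ut, hut, hsuper⟩ := hineq t₀ ht₀' x₀ hx₀O
  have hheat := time_deriv_sub_lap_le_of_isMinOn hmin ht₀'
    (mem_of_superset (hO.mem_nhds hx₀O) subset_closure) hut
    ((hC2x t₀ ht₀').contDiffAt (hO.mem_nhds hx₀O))
  have hdamp : β t₀ x₀ * (|u t₀ x₀| ^ (p - 2) * u t₀ x₀) ≤ 0 :=
    mul_nonpos_of_nonneg_of_nonpos (hβ t₀ x₀)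
      (mul_nonpos_of_nonneg_of_nonpos (by positivity) huneg.le)
  linarith

/-- Parabolic maximum principle for the damped heat inequality:
Let `O ⊆ ℝ^d` be bounded open, `T > 0`, `p ≥ 2`, `β ≥ 0`. Let `u` be continuous on
`[0,T] × closure O`, with `∂u/∂t` existing and `u(t,·)` twice continuously
differentiable in `x` on `(0,T] × O`, satisfying
`∂u/∂t − Δ_x u + β |u|^{p−2} u ≥ 0` there. If `u(0,·) ≥ 0` on `closure O` and
`u(t,·) = 0` on `∂O` for all `t ∈ [0,T]`, then `u ≥ 0` on `[0,T] × closure O`. -/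
theorem parabolic_maximum_principle (d : ℕ)
    (O : Set (EuclideanSpace ℝ (Fin d))) (hO : IsOpen O) (hObdd : Bornology.IsBounded O)
    (T : ℝ) (hT : 0 < T) (p : ℝ) (hp : 2 ≤ p)
    (β : ℝ → EuclideanSpace ℝ (Fin d) → ℝ) (hβ : ∀ t x, 0 ≤ β t x)
    (u : ℝ → EuclideanSpace ℝ (Fin d) → ℝ)
    (hcont : ContinuousOn (fun q : ℝ × EuclideanSpace ℝ (Fin d) => u q.1 q.2)
      (Set.Icc 0 T ×ˢ closure O))
    (hC2x : ∀ t ∈ Set.Ioc (0 : ℝ) T, ContDiffOn ℝ 2 (u t) O)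
    (hineq : ∀ t ∈ Set.Ioc (0 : ℝ) T, ∀ x ∈ O, ∃ ut : ℝ,
      HasDerivAt (fun s => u s x) ut t ∧
      0 ≤ ut - lap (u t) x + β t x * (|u t x| ^ (p - 2) * u t x))
    (hinit : ∀ x ∈ closure O, 0 ≤ u 0 x)
    (hbd : ∀ t ∈ Set.Icc (0 : ℝ) T, ∀ x ∈ frontier O, u t x = 0) :
    ∀ t ∈ Set.Icc (0 : ℝ) T, ∀ x ∈ closure O, 0 ≤ u t x :=
  parabolic_maximum_principle_general d O hO hObdd T p β hβ u hcont hC2x hineq hinit hbd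
end
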